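/- (Entanglement rate bound for Tsallis entropy, q ≥ 2, commutator form.) Let q ≥ 2 and let d ≥ 2 be an integer satisfying d^(−2(q−1)) < q − √(q² − 1). Let n ≥ 1 and let X, Y be n×n complex matrices with 0 ≤ X ≤ Y ≤ I, Tr X = 1/d², and Tr Y = 1. Then (q/(q−1)) · d^(q+1) · ‖[X, Y^(q−1)]‖₁ ≤ 9 · (q/(q−1)) · (d^(q−1) − d^(1−q)). -/

import Mathlib

open scoped ComplexOrder

/-- The trace norm of a complex matrix: `Tr √(Aᴴ A)`, the sum of singular values. -/
noncomputable def traceNorm {n : ℕ} (A : Matrix (Fin n) (Fin n) ℂ) : ℝ :=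
  (((Matrix.posSemidef_conjTranspose_mul_self A).1.eigenvectorUnitary : Matrix (Fin n) (Fin n) ℂ) *
    Matrix.diagonal (fun i => ((Real.sqrt ((Matrix.posSemidef_conjTranspose_mul_self A).1.eigenvalues i) : ℝ) : ℂ)) *
    (star (Matrix.posSemidef_conjTranspose_mul_self A).1.eigenvectorUnitary :
      Matrix (Fin n) (Fin n) ℂ)).trace.re

/-- For a Hermitian matrix `Y = Σⱼ yⱼ |φⱼ⟩⟨φⱼ|`, the matrix `f(Y) = Σⱼ f(yⱼ) |φⱼ⟩⟨φⱼ|`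
(junk value `0` if `Y` is not Hermitian). -/
noncomputable def matFun {n : ℕ} (f : ℝ → ℝ) (Y : Matrix (Fin n) (Fin n) ℂ) :
    Matrix (Fin n) (Fin n) ℂ :=
  if hY : Y.IsHermitian then
    (hY.eigenvectorUnitary : Matrix (Fin n) (Fin n) ℂ) *
      Matrix.diagonal (fun i => (f (hY.eigenvalues i) : ℂ)) *
      (star hY.eigenvectorUnitary : Matrix (Fin n) (Fin n) ℂ)
  else 0

/-! Since `0 ≤ Y ≤ 1`, the matrix `Z = Y^(q-1)` is a contraction. Polar decomposition gives a
contraction `W` with `‖A‖₁ = Re Tr (Wᴴ A)`, and cyclicity of the trace turns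
`Re Tr (Wᴴ [X, Z])` into `Re Tr ([Z, Wᴴ] X) ≤ ‖[Z, Wᴴ]‖ Tr X ≤ 2 Tr X` for `X ≥ 0`.
So the left-hand side is at most `(q/(q-1)) d^(q+1) · 2/d² = 2 (q/(q-1)) d^(q-1)`, and
`2a ≤ 9 (a - a⁻¹)` as soon as `a = d^(q-1) ≥ 2`. -/

open Matrix Unitary
open scoped Matrix.Norms.L2Operator

namespace Matrix

variable {m : Type*} [Fintype m] {𝕜 : Type*} [RCLike 𝕜]

theorem norm_apply_le_l2_opNorm {n : Type*} [Fintype n] [DecidableEq n] (A : Matrix m n 𝕜) (i : m)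
    (j : n) : ‖A i j‖ ≤ ‖A‖ := by
  have hcol := l2_opNorm_mulVec A (EuclideanSpace.single j 1)
  have hentry := PiLp.norm_apply_le
    ((EuclideanSpace.equiv m 𝕜).symm (A *ᵥ (EuclideanSpace.single j (1 : 𝕜)).ofLp)) i
  simp only [PiLp.ofLp_single, mulVec_single_one, PiLp.norm_single,
    norm_one, mul_one] at hcol hentry
  exact hentry.trans hcol

variable [DecidableEq m]

theorem trace_conjStarAlgAut {R : Type*} [CommRing R] [StarRing R] (U : unitary (Matrix m m R))
    (D : Matrix m m R) : (conjStarAlgAut R _ U D).trace = D.trace := by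
  rw [conjStarAlgAut_apply, trace_mul_cycle, Unitary.coe_star_mul_self, one_mul]

theorem norm_conjStarAlgAut (U : unitary (Matrix m m 𝕜)) (D : Matrix m m 𝕜) :
    ‖conjStarAlgAut 𝕜 _ U D‖ = ‖D‖ := by
  rw [conjStarAlgAut_apply, ← coe_star, CStarRing.norm_mul_coe_unitary,
    CStarRing.norm_coe_unitary_mul]

theorem trace_mul_diagonal {R : Type*} [NonUnitalNonAssocSemiring R] (N : Matrix m m R)
    (w : m → R) : (N * diagonal w).trace = ∑ i, N i i * w i := by
  simp [trace, mul_diagonal]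

theorem re_trace_mul_le_of_posSemidef {X : Matrix m m 𝕜} (hX : X.PosSemidef)
    (M : Matrix m m 𝕜) : RCLike.re (M * X).trace ≤ ‖M‖ * RCLike.re X.trace := by
  set P := hX.1.eigenvectorUnitary
  set μ := hX.1.eigenvalues
  have hD : conjStarAlgAut 𝕜 _ (star P) X = diagonal (RCLike.ofReal ∘ μ) := by
    rw [← conjStarAlgAut_symm, StarAlgEquiv.symm_apply_eq]
    exact hX.1.spectral_theorem
  set N := conjStarAlgAut 𝕜 _ (star P) M
  have hMX : (M * X).trace = ∑ i, N i i * μ i := by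
    rw [← trace_conjStarAlgAut (star P), map_mul, hD, trace_mul_diagonal]
    rfl
  have hTrX : X.trace = ∑ i, (μ i : 𝕜) := by
    rw [← trace_conjStarAlgAut (star P), hD, trace_diagonal]
    rfl
  rw [hMX, hTrX, map_sum, map_sum, Finset.mul_sum]
  gcongr with i
  have hN : ‖N i i‖ ≤ ‖M‖ :=
    (norm_apply_le_l2_opNorm N i i).trans (norm_conjStarAlgAut _ M).le
  rw [RCLike.re_mul_ofReal, RCLike.ofReal_re]
  exact mul_le_mul_of_nonneg_right ((RCLike.re_le_norm _).trans hN) (hX.eigenvalues_nonneg i)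

theorem IsHermitian.eigenvalues_le_one {Y : Matrix m m 𝕜} (hY : Y.IsHermitian)
    (hY1 : (1 - Y).PosSemidef) (i : m) : hY.eigenvalues i ≤ 1 := by
  set v := hY.eigenvectorBasis i
  have hv : RCLike.re (star v.ofLp ⬝ᵥ v.ofLp) = 1 := by
    rw [dotProduct_comm, ← EuclideanSpace.inner_eq_star_dotProduct, inner_self_eq_norm_sq_to_K,
      hY.eigenvectorBasis.orthonormal.1 i]
    simp
  have hquad := hY1.re_dotProduct_nonneg v.ofLp
  rw [sub_mulVec, one_mulVec, dotProduct_sub, map_sub, ← hY.eigenvalues_eq] at hquad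
  linarith

end Matrix

/-- `W = A (AᴴA)^(-1/2)`, where `(√0)⁻¹ = 0` makes the inverse square root the pseudo-inverse one,
so that `WᴴW` is the projection onto the support of `AᴴA`. -/
theorem exists_norm_le_one_re_trace_eq_traceNorm {n : ℕ} (A : Matrix (Fin n) (Fin n) ℂ) :
    ∃ W : Matrix (Fin n) (Fin n) ℂ, ‖W‖ ≤ 1 ∧ (Wᴴ * A).trace.re = traceNorm A := by
  set hH := posSemidef_conjTranspose_mul_self A
  set V := hH.1.eigenvectorUnitary
  set μ := hH.1.eigenvalues
  set diagR : (Fin n → ℝ) → Matrix (Fin n) (Fin n) ℂ := fun v => diagonal fun i => (v i : ℂ)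
  have diagR_mul (v w : Fin n → ℝ) : diagR v * diagR w = diagR (v * w) := by
    simp [diagR, diagonal_mul_diagonal]
  have hAA : Aᴴ * A = conjStarAlgAut ℂ _ V (diagR μ) := hH.1.spectral_theorem
  set g : Fin n → ℝ := fun i => (√(μ i))⁻¹
  have hgμ (i : Fin n) : g i * μ i = √(μ i) := by simp only [g, inv_mul_eq_div, Real.div_sqrt]
  set C := conjStarAlgAut ℂ _ V (diagR g)
  have hC : Cᴴ = C := by
    rw [← star_eq_conjTranspose, ← map_star]
    congr 1
    simp [diagR, star_eq_conjTranspose, diagonal_conjTranspose]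
  refine ⟨A * C, ?_, ?_⟩
  · have hgram : (A * C)ᴴ * (A * C) = conjStarAlgAut ℂ _ V (diagR (g * μ * g)) := by
      rw [conjTranspose_mul, hC, mul_assoc, ← mul_assoc Aᴴ, hAA]
      simp only [C, ← map_mul, diagR_mul, mul_assoc]
    have hle : ‖(A * C)ᴴ * (A * C)‖ ≤ 1 := by
      rw [hgram, norm_conjStarAlgAut, l2_opNorm_diagonal, pi_norm_le_iff_of_nonneg zero_le_one]
      intro i
      have h : ‖((g i * μ i * g i : ℝ) : ℂ)‖ = √(μ i) * (√(μ i))⁻¹ := by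
        rw [hgμ, Complex.norm_real, Real.norm_of_nonneg (by positivity)]
      exact h.trans_le mul_inv_le_one
    rw [l2_opNorm_conjTranspose_mul_self] at hle
    nlinarith [norm_nonneg (A * C)]
  · have hpolar : (A * C)ᴴ * A = conjStarAlgAut ℂ _ V (diagR fun i => √(μ i)) := by
      rw [conjTranspose_mul, hC, mul_assoc, hAA]
      simp only [C, ← map_mul, diagR_mul]
      congr 3
      funext i
      exact hgμ i
    rw [hpolar]
    rfl

theorem traceNorm_commutator_le {n : ℕ} {X : Matrix (Fin n) (Fin n) ℂ} (hX : X.PosSemidef)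
    (Z : Matrix (Fin n) (Fin n) ℂ) : traceNorm (X * Z - Z * X) ≤ 2 * ‖Z‖ * X.trace.re := by
  obtain ⟨W, hW, hTr⟩ := exists_norm_le_one_re_trace_eq_traceNorm (X * Z - Z * X)
  have hcyc : (Wᴴ * (X * Z - Z * X)).trace = ((Z * Wᴴ - Wᴴ * Z) * X).trace := by
    simp only [mul_sub, sub_mul, trace_sub, ← mul_assoc]
    rw [trace_mul_cycle Wᴴ X Z]
  have hnorm : ‖Z * Wᴴ - Wᴴ * Z‖ ≤ 2 * ‖Z‖ := by
    have hWH : ‖Wᴴ‖ ≤ 1 := (l2_opNorm_conjTranspose W).trans_le hW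
    calc ‖Z * Wᴴ - Wᴴ * Z‖ ≤ ‖Z‖ * ‖Wᴴ‖ + ‖Wᴴ‖ * ‖Z‖ :=
          (norm_sub_le _ _).trans (add_le_add (norm_mul_le _ _) (norm_mul_le _ _))
      _ ≤ 2 * ‖Z‖ := by nlinarith [norm_nonneg Z, norm_nonneg Wᴴ]
  have hX0 : 0 ≤ X.trace.re := (Complex.nonneg_iff.mp hX.trace_nonneg).1
  calc traceNorm (X * Z - Z * X) = ((Z * Wᴴ - Wᴴ * Z) * X).trace.re := by rw [← hTr, hcyc]
    _ ≤ ‖Z * Wᴴ - Wᴴ * Z‖ * X.trace.re := re_trace_mul_le_of_posSemidef hX _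
    _ ≤ 2 * ‖Z‖ * X.trace.re := mul_le_mul_of_nonneg_right hnorm hX0

theorem norm_matFun_le_one {n : ℕ} {f : ℝ → ℝ} (hf : ∀ t ∈ Set.Icc (0 : ℝ) 1, ‖f t‖ ≤ 1)
    {Y : Matrix (Fin n) (Fin n) ℂ} (hY : Y.PosSemidef) (hY1 : (1 - Y).PosSemidef) :
    ‖matFun f Y‖ ≤ 1 := by
  have hmat : matFun f Y = conjStarAlgAut ℂ _ hY.1.eigenvectorUnitary
      (diagonal fun i => (f (hY.1.eigenvalues i) : ℂ)) := by
    rw [matFun, dif_pos hY.1]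
    rfl
  rw [hmat, norm_conjStarAlgAut, l2_opNorm_diagonal, pi_norm_le_iff_of_nonneg zero_le_one]
  intro i
  rw [Complex.norm_real]
  exact hf _ ⟨hY.eigenvalues_nonneg i, hY.1.eigenvalues_le_one hY1 i⟩

theorem two_mul_rpow_le {q d : ℝ} (hq : 2 ≤ q) (hd : 2 ≤ d) :
    2 * d ^ (q - 1) ≤ 9 * (d ^ (q - 1) - d ^ (1 - q)) := by
  have hlarge : 2 ≤ d ^ (q - 1) :=
    hd.trans (Real.self_le_rpow_of_one_le (by linarith) (by linarith))
  have hsmall : d ^ (1 - q) ≤ 1 :=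
    Real.rpow_le_one_of_one_le_of_nonpos (by linarith) (by linarith)
  linarith

theorem tsallis_entanglement_rate_bound_general {n : ℕ} (q : ℝ) (hq : 2 ≤ q)
    (d : ℕ) (hd : 2 ≤ d)
    (X Y : Matrix (Fin n) (Fin n) ℂ)
    (hX : X.PosSemidef) (hXY : (Y - X).PosSemidef)
    (hYI : ((1 : Matrix (Fin n) (Fin n) ℂ) - Y).PosSemidef)
    (hTrX : X.trace = 1 / (d : ℂ) ^ 2) :
    (q / (q - 1)) * (d : ℝ) ^ (q + 1) *
        traceNorm (X * matFun (fun t => t ^ (q - 1)) Y -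
          matFun (fun t => t ^ (q - 1)) Y * X) ≤
      9 * (q / (q - 1)) * ((d : ℝ) ^ (q - 1) - (d : ℝ) ^ (1 - q)) := by
  set Z := matFun (fun t => t ^ (q - 1)) Y
  have hY : Y.PosSemidef := by simpa using hX.add hXY
  have hZ : ‖Z‖ ≤ 1 := norm_matFun_le_one (fun t ht => by
    rw [Real.norm_of_nonneg (Real.rpow_nonneg ht.1 _)]
    exact Real.rpow_le_one ht.1 ht.2 (by linarith)) hY hYI
  have hTrX' : X.trace.re = 1 / (d : ℝ) ^ 2 := by
    rw [hTrX, show 1 / (d : ℂ) ^ 2 = ((1 / (d : ℝ) ^ 2 : ℝ) : ℂ) by push_cast; rfl,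
      Complex.ofReal_re]
  have hcomm : traceNorm (X * Z - Z * X) ≤ 2 * 1 * (1 / (d : ℝ) ^ 2) :=
    calc traceNorm (X * Z - Z * X) ≤ 2 * ‖Z‖ * X.trace.re := traceNorm_commutator_le hX Z
      _ ≤ 2 * 1 * (1 / (d : ℝ) ^ 2) := by rw [hTrX']; gcongr
  have hd' : (2 : ℝ) ≤ d := by exact_mod_cast hd
  have hpow : (d : ℝ) ^ (q + 1) = (d : ℝ) ^ (q - 1) * (d : ℝ) ^ 2 := by
    rw [← Real.rpow_natCast, ← Real.rpow_add (by linarith)]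
    ring_nf
  have hqq : 0 ≤ q / (q - 1) := div_nonneg (by linarith) (by linarith)
  calc q / (q - 1) * (d : ℝ) ^ (q + 1) * traceNorm (X * Z - Z * X)
      ≤ q / (q - 1) * (d : ℝ) ^ (q + 1) * (2 * 1 * (1 / (d : ℝ) ^ 2)) := by gcongr
    _ = q / (q - 1) * (2 * (d : ℝ) ^ (q - 1)) := by rw [hpow]; field_simp
    _ ≤ q / (q - 1) * (9 * ((d : ℝ) ^ (q - 1) - (d : ℝ) ^ (1 - q))) :=
        mul_le_mul_of_nonneg_left (two_mul_rpow_le hq hd') hqq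
    _ = 9 * (q / (q - 1)) * ((d : ℝ) ^ (q - 1) - (d : ℝ) ^ (1 - q)) := by ring

theorem tsallis_entanglement_rate_bound {n : ℕ} (hn : 1 ≤ n) (q : ℝ) (hq : 2 ≤ q)
    (d : ℕ) (hd : 2 ≤ d)
    (hdq : (d : ℝ) ^ (-(2 * (q - 1))) < q - Real.sqrt (q ^ 2 - 1))
    (X Y : Matrix (Fin n) (Fin n) ℂ)
    (hX : X.PosSemidef) (hXY : (Y - X).PosSemidef)
    (hYI : ((1 : Matrix (Fin n) (Fin n) ℂ) - Y).PosSemidef)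
    (hTrX : X.trace = 1 / (d : ℂ) ^ 2) (hTrY : Y.trace = 1) :
    (q / (q - 1)) * (d : ℝ) ^ (q + 1) *
        traceNorm (X * matFun (fun t => t ^ (q - 1)) Y -
          matFun (fun t => t ^ (q - 1)) Y * X) ≤
      9 * (q / (q - 1)) * ((d : ℝ) ^ (q - 1) - (d : ℝ) ^ (1 - q)) :=
  tsallis_entanglement_rate_bound_general q hq d hd X Y hX hXY hYI hTrX
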